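/- arXiv:2511.21016 — 6 statements merged into one kernel-verified Lean document; each statement's English description precedes it below -/
import Mathlib

section
/- The Chebyshev weight sequence is monotonically decreasing and bounded: for every r ≥ 0, 2 = ω₀ ≥ ω₁ ≥ … ≥ ω_r ≥ ω₁* > 1; consequently, 4 − ρ²·ω_i ∈ [2, 4] for all i = 0, 1, …, r. -/
/-!
The weights iterate `f x = 4 / (4 - c x)` with `c = ρ²`. The number
`ω₁* = 2 / (1 + √(1 - c))` is the smaller root of `c x² - 4x + 4 = 0`, i.e. a fixed point of
`f`, and the factorisation `c x² - 4x + 4 = (x - ω₁*) (c (x + ω₁*) - 4)` shows that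
`f x ≤ x` on `[ω₁*, 2]`. Since `f` is increasing, it maps `[ω₁*, 2]` into itself, so the
iterates starting at `2` decrease inside it.
-/

open Set

namespace ChebyshevWeights

noncomputable def weightStar (c : ℝ) : ℝ := 2 * (1 - √(1 - c)) / c

variable {c : ℝ}

theorem weightStar_eq_two_div (hc0 : 0 < c) (hc1 : c ≤ 1) :
    weightStar c = 2 / (1 + √(1 - c)) := by
  have hs : √(1 - c) ^ 2 = 1 - c := Real.sq_sqrt (by linarith)
  rw [weightStar, div_eq_div_iff hc0.ne' (by positivity)]
  linear_combination -2 * hs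

theorem one_lt_weightStar (hc0 : 0 < c) (hc1 : c ≤ 1) : 1 < weightStar c := by
  have hs : √(1 - c) < 1 := (Real.sqrt_lt' one_pos).2 (by linarith)
  rw [weightStar_eq_two_div hc0 hc1, one_lt_div (by positivity)]
  linarith

theorem weightStar_le_two (hc0 : 0 < c) (hc1 : c ≤ 1) : weightStar c ≤ 2 := by
  rw [weightStar_eq_two_div hc0 hc1, div_le_iff₀ (by positivity)]
  nlinarith [Real.sqrt_nonneg (1 - c)]

theorem weightStar_quadratic (hc0 : 0 < c) (hc1 : c ≤ 1) :
    c * weightStar c ^ 2 - 4 * weightStar c + 4 = 0 := by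
  have hs : √(1 - c) ^ 2 = 1 - c := Real.sq_sqrt (by linarith)
  rw [weightStar_eq_two_div hc0 hc1]
  field_simp
  linear_combination 4 * hs

theorem four_sub_mul_mem_Icc {x : ℝ} (hc0 : 0 ≤ c) (hc1 : c ≤ 1) (hx : x ∈ Icc 0 2) :
    4 - c * x ∈ Icc 2 4 := by
  obtain ⟨hx0, hx2⟩ := hx
  constructor <;> nlinarith

theorem div_four_sub_mul_mem_Icc {a x : ℝ} (hc0 : 0 ≤ c) (hc1 : c ≤ 1)
    (ha : c * a ^ 2 - 4 * a + 4 = 0) (hx : x ∈ Icc a 2) :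
    4 / (4 - c * x) ∈ Icc a x := by
  obtain ⟨hax, hx2⟩ := hx
  have ha0 : 0 < a := by nlinarith [mul_nonneg hc0 (sq_nonneg a)]
  have hden : 0 < 4 - c * x := by
    linarith [(four_sub_mul_mem_Icc hc0 hc1 ⟨by linarith, hx2⟩).1]
  constructor
  · -- `4 - 4a = -c a²`, so `a (4 - c x) ≤ 4` reduces to `c a (x - a) ≥ 0`
    rw [le_div_iff₀ hden]
    nlinarith [mul_nonneg (mul_nonneg hc0 ha0.le) (sub_nonneg.2 hax)]
  · rw [div_le_iff₀ hden]
    nlinarith [mul_nonneg (sub_nonneg.2 hax) (by nlinarith : 0 ≤ 4 - c * (x + a))]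

theorem weights_mem_Icc {a : ℝ} {ω : ℕ → ℝ} (hc0 : 0 ≤ c) (hc1 : c ≤ 1)
    (ha : c * a ^ 2 - 4 * a + 4 = 0) (h0 : ω 0 ∈ Icc a 2)
    (hrec : ∀ i, ω (i + 1) = 4 / (4 - c * ω i)) (i : ℕ) : ω i ∈ Icc a 2 := by
  induction i with
  | zero => exact h0
  | succ i ih =>
    obtain ⟨hlow, hup⟩ := hrec i ▸ div_four_sub_mul_mem_Icc hc0 hc1 ha ih
    exact ⟨hlow, hup.trans ih.2⟩

end ChebyshevWeights

open ChebyshevWeights in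
/-- The Chebyshev weight sequence `ω₀ = 2`,
`ω_{i+1} = 4/(4 − ρ²ω_i)` is monotonically decreasing and bounded:
`2 = ω₀ ≥ ω₁ ≥ … ≥ ω₁* > 1`; consequently `4 − ρ²ω_i ∈ [2, 4]` for all `i`. -/
theorem chebyshev_weights_decreasing_bounded (ρ : ℝ) (hρ : ρ ∈ Set.Ioo (0 : ℝ) 1)
    (ω : ℕ → ℝ) (hω0 : ω 0 = 2)
    (hωrec : ∀ i, ω (i + 1) = 4 / (4 - ρ ^ 2 * ω i)) :
    let ωstar := 2 * (1 - Real.sqrt (1 - ρ ^ 2)) / ρ ^ 2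
    (∀ i, ω (i + 1) ≤ ω i) ∧ (∀ i, ωstar ≤ ω i) ∧ 1 < ωstar ∧
      ∀ i, 4 - ρ ^ 2 * ω i ∈ Set.Icc (2 : ℝ) 4 := by
  show _ ∧ (∀ i, weightStar (ρ ^ 2) ≤ ω i) ∧ 1 < weightStar (ρ ^ 2) ∧ _
  obtain ⟨hρ0, hρ1⟩ := hρ
  have hc0 : 0 < ρ ^ 2 := by positivity
  have hc1 : ρ ^ 2 ≤ 1 := by nlinarith
  have hstar := weightStar_quadratic hc0 hc1
  have hmem := weights_mem_Icc hc0.le hc1 hstar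
    ⟨hω0 ▸ weightStar_le_two hc0 hc1, hω0.le⟩ hωrec
  have hone := one_lt_weightStar hc0 hc1
  refine ⟨fun i => ?_, fun i => (hmem i).1, hone, fun i => ?_⟩
  · exact (hωrec i ▸ div_four_sub_mul_mem_Icc hc0.le hc1 hstar (hmem i)).2
  · exact four_sub_mul_mem_Icc hc0.le hc1 ⟨by linarith [(hmem i).1], (hmem i).2⟩
end

section
/- Linear convergence of the Chebyshev weights: let κ = L/μ > 1 and ρ = (L−μ)/(L+μ). Then for every i ≥ 1, ω_i − ω₁* ≤ R^i · (ω₀ − ω₁*), where R = ((κ−1)/(κ+1)) · ((√κ − 1)/(√κ + 1)). -/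
/-!
Write `s = √(1 - ρ²)`, so that `ρ² = (1 - s)(1 + s)` and `ω₁* = 2 / (1 + s)` is the fixed point of
`w ↦ 4 / (4 - ρ² w)`. Clearing denominators gives
`4 / (4 - ρ² w) - ω₁* = (1 - s) (w - ω₁*) · 2 / (4 - ρ² w)`,
and on `[ω₁*, 2]` the last factor lies in `(0, 1]`, so the map sends `[ω₁*, 2]` into itself and
contracts distances to `ω₁*` by `1 - s`. With `ρ = (κ - 1)/(κ + 1)` one finds `s = 2√κ / (κ + 1)`,
and `1 - s = (√κ - 1)² / (κ + 1)` is exactly `R`.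
-/

namespace ChebyshevWeights

lemma two_mul_one_sub_div_one_sub_sq {s : ℝ} (hs0 : 0 ≤ s) (hs1 : s < 1) :
    2 * (1 - s) / (1 - s ^ 2) = 2 / (1 + s) := by
  rw [div_eq_div_iff (by nlinarith) (by linarith)]
  ring

lemma step_sub_fixedPoint {s w : ℝ} (hs : 1 + s ≠ 0) (hw : 4 - (1 - s ^ 2) * w ≠ 0) :
    4 / (4 - (1 - s ^ 2) * w) - 2 / (1 + s)
      = (1 - s) * (w - 2 / (1 + s)) * (2 / (4 - (1 - s ^ 2) * w)) := by
  field_simp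
  ring

lemma step_mem_Icc_and_sub_le {s w : ℝ} (hs0 : 0 ≤ s) (hs1 : s ≤ 1)
    (hw : w ∈ Set.Icc (2 / (1 + s)) 2) :
    4 / (4 - (1 - s ^ 2) * w) ∈ Set.Icc (2 / (1 + s)) 2 ∧
      4 / (4 - (1 - s ^ 2) * w) - 2 / (1 + s) ≤ (1 - s) * (w - 2 / (1 + s)) := by
  obtain ⟨hlo, hhi⟩ := hw
  have hw0 : 0 ≤ w := (div_nonneg zero_le_two (by linarith)).trans hlo
  have hden : 2 ≤ 4 - (1 - s ^ 2) * w := by nlinarith [mul_nonneg (sq_nonneg s) hw0]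
  have hfactor : 2 / (4 - (1 - s ^ 2) * w) ≤ 1 := (div_le_one (by linarith)).2 hden
  have hdist : 0 ≤ (1 - s) * (w - 2 / (1 + s)) := mul_nonneg (by linarith) (by linarith)
  have heq := step_sub_fixedPoint (by linarith : 1 + s ≠ 0) (by linarith : 4 - (1 - s ^ 2) * w ≠ 0)
  refine ⟨⟨?_, ?_⟩, ?_⟩
  · rw [← sub_nonneg, heq]
    exact mul_nonneg hdist (div_nonneg zero_le_two (by linarith))
  · rw [div_le_iff₀ (by linarith)]
    linarith
  · rw [heq]
    exact mul_le_of_le_one_right hdist hfactor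

lemma mem_Icc_and_sub_fixedPoint_le_pow {s : ℝ} (hs0 : 0 ≤ s) (hs1 : s ≤ 1) {ω : ℕ → ℝ}
    (hω0 : ω 0 = 2)
    (hωrec : ∀ i, ω (i + 1) = 4 / (4 - (1 - s ^ 2) * ω i)) (i : ℕ) :
    ω i ∈ Set.Icc (2 / (1 + s)) 2 ∧ ω i - 2 / (1 + s) ≤ (1 - s) ^ i * (ω 0 - 2 / (1 + s)) := by
  induction i with
  | zero =>
    refine ⟨⟨?_, hω0.le⟩, by simp⟩
    rw [hω0, div_le_iff₀ (by linarith)]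
    linarith
  | succ n ih =>
    obtain ⟨hmem, hle⟩ := ih
    obtain ⟨hmem', hstep⟩ := step_mem_Icc_and_sub_le hs0 hs1 hmem
    rw [hωrec n]
    refine ⟨hmem', ?_⟩
    calc _ ≤ (1 - s) * (ω n - 2 / (1 + s)) := hstep
      _ ≤ (1 - s) * ((1 - s) ^ n * (ω 0 - 2 / (1 + s))) :=
          mul_le_mul_of_nonneg_left hle (by linarith)
      _ = (1 - s) ^ (n + 1) * (ω 0 - 2 / (1 + s)) := by ring

lemma sub_div_add_eq_div_sub_one_div_add_one {L μ : ℝ} (hμ : μ ≠ 0) :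
    (L - μ) / (L + μ) = (L / μ - 1) / (L / μ + 1) := by
  rw [div_sub_one hμ, div_add_one hμ, div_div_div_cancel_right₀ hμ]

lemma one_sub_sq_div_add_one {κ : ℝ} (hκ : 0 ≤ κ) :
    1 - ((κ - 1) / (κ + 1)) ^ 2 = (2 * √κ / (κ + 1)) ^ 2 := by
  field_simp
  rw [Real.sq_sqrt hκ]
  ring

lemma one_sub_two_sqrt_div_add_one {κ : ℝ} (hκ : 0 ≤ κ) :
    1 - 2 * √κ / (κ + 1) = (κ - 1) / (κ + 1) * ((√κ - 1) / (√κ + 1)) := by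
  obtain ⟨t, ht, rfl⟩ : ∃ t, 0 ≤ t ∧ κ = t ^ 2 := ⟨√κ, Real.sqrt_nonneg κ, (Real.sq_sqrt hκ).symm⟩
  rw [Real.sqrt_sq ht]
  field_simp
  ring

end ChebyshevWeights

open ChebyshevWeights in
/-- Linear convergence of the Chebyshev weights: with
`κ = L/μ > 1`, `ρ = (L−μ)/(L+μ)`, for every `i ≥ 1`,
`ω_i − ω₁* ≤ Rⁱ (ω₀ − ω₁*)` where
`R = ((κ−1)/(κ+1))·((√κ − 1)/(√κ + 1))`. -/
theorem chebyshev_weights_linear_convergence (L μ : ℝ) (hμ : 0 < μ) (hLμ : μ < L)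
    (ρ : ℝ) (hρ : ρ = (L - μ) / (L + μ))
    (ω : ℕ → ℝ) (hω0 : ω 0 = 2)
    (hωrec : ∀ i, ω (i + 1) = 4 / (4 - ρ ^ 2 * ω i)) :
    let κ := L / μ
    let ωstar := 2 * (1 - Real.sqrt (1 - ρ ^ 2)) / ρ ^ 2
    let R := ((κ - 1) / (κ + 1)) * ((Real.sqrt κ - 1) / (Real.sqrt κ + 1))
    ∀ i, 1 ≤ i → ω i - ωstar ≤ R ^ i * (ω 0 - ωstar) := by
  intro κ ωstar R i _
  have hκ : 1 < κ := (one_lt_div hμ).2 hLμ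
  have hρκ : ρ = (κ - 1) / (κ + 1) := hρ.trans (sub_div_add_eq_div_sub_one_div_add_one hμ.ne')
  have h1ρ : 1 - ρ ^ 2 = (2 * √κ / (κ + 1)) ^ 2 := by rw [hρκ, one_sub_sq_div_add_one (by linarith)]
  set s := √(1 - ρ ^ 2) with hs
  have hs_eq : s = 2 * √κ / (κ + 1) := by rw [hs, h1ρ, Real.sqrt_sq (by positivity)]
  have hs0 : 0 ≤ s := Real.sqrt_nonneg _
  have hs1 : s < 1 := by
    rw [hs_eq, div_lt_one (by linarith)]
    nlinarith [Real.sq_sqrt (by linarith : (0 : ℝ) ≤ κ), Real.sqrt_lt_sqrt zero_le_one hκ,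
      Real.sqrt_one]
  have hρsq : ρ ^ 2 = 1 - s ^ 2 := by
    rw [hs_eq]
    linarith
  have hωstar : ωstar = 2 / (1 + s) := by
    show 2 * (1 - s) / ρ ^ 2 = _
    rw [hρsq]
    exact two_mul_one_sub_div_one_sub_sq hs0 hs1
  have hR : R = 1 - s := by rw [hs_eq, one_sub_two_sqrt_div_add_one (by linarith)]
  rw [hωstar, hR]
  exact (mem_Icc_and_sub_fixedPoint_le_pow hs0 hs1.le hω0 (by simpa only [hρsq] using hωrec) i).2
end

section
/- With ρ = (κ−1)/(κ+1), the lower fixed point satisfies ω₁* = 2(1 − √(1 − ρ²))/ρ² = 2(κ+1)/(1 + √κ)²; the function κ ↦ 2(κ+1)/(1 + √κ)² is strictly increasing on (1, ∞); and for every κ ≥ 10, ω₁* ≥ 5/4, so that all Chebyshev weights satisfy ω_i − 1 ∈ [1/4, 1] for i ≥ 1. -/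
/-!
Put `s = √κ`. Then `ρ = (s² - 1)/(s² + 1)` and `√(1 - ρ²) = 2s/(s² + 1)`, which turns `ω₁*` into
`2(s² + 1)/(1 + s)²`; this is increasing for `s ≥ 1` and equals `5/4` at `κ = 9`.
The Chebyshev step `w ↦ 4/(4 - ρ² w)` is increasing, fixes `ω₁*` and maps `2` below `2`,
so it keeps `[ω₁*, 2]` invariant and every weight stays in `[ω₁*, 2] ⊆ [5/4, 2]`.
-/

open Real Set

noncomputable def lowerFixedPoint (κ : ℝ) : ℝ := 2 * (κ + 1) / (1 + √κ) ^ 2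

section LowerFixedPoint

variable {κ : ℝ}

theorem sqrt_one_sub_sq_div (hκ : 0 ≤ κ) :
    √(1 - ((κ - 1) / (κ + 1)) ^ 2) = 2 * √κ / (κ + 1) := by
  obtain ⟨s, hs, rfl⟩ : ∃ s, 0 ≤ s ∧ κ = s ^ 2 := ⟨√κ, sqrt_nonneg κ, (sq_sqrt hκ).symm⟩
  have hsq : 1 - ((s ^ 2 - 1) / (s ^ 2 + 1)) ^ 2 = (2 * s / (s ^ 2 + 1)) ^ 2 := by
    field_simp
    ring
  rw [hsq, sqrt_sq (by positivity), sqrt_sq hs]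

theorem two_mul_one_sub_sqrt_div_eq_lowerFixedPoint (hκ : 0 ≤ κ) (hκ1 : κ ≠ 1) :
    2 * (1 - √(1 - ((κ - 1) / (κ + 1)) ^ 2)) / ((κ - 1) / (κ + 1)) ^ 2 = lowerFixedPoint κ := by
  rw [sqrt_one_sub_sq_div hκ, lowerFixedPoint]
  obtain ⟨s, hs, rfl⟩ : ∃ s, 0 ≤ s ∧ κ = s ^ 2 := ⟨√κ, sqrt_nonneg κ, (sq_sqrt hκ).symm⟩
  have hs1 : s - 1 ≠ 0 := fun h => hκ1 (by rw [sub_eq_zero.mp h]; norm_num)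
  rw [sqrt_sq hs, show s ^ 2 - 1 = (s - 1) * (s + 1) by ring]
  field_simp
  ring

theorem sub_div_add_sq_le_one (hκ : 0 ≤ κ) : ((κ - 1) / (κ + 1)) ^ 2 ≤ 1 := by
  rw [sq_le_one_iff_abs_le_one, abs_le, le_div_iff₀ (by linarith), div_le_one (by linarith)]
  constructor <;> linarith

theorem lowerFixedPoint_le_two (hκ : 0 ≤ κ) : lowerFixedPoint κ ≤ 2 := by
  rw [lowerFixedPoint, div_le_iff₀ (by positivity)]
  nlinarith [sq_sqrt hκ, sqrt_nonneg κ]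

theorem four_div_four_sub_mul_lowerFixedPoint (hκ : 0 ≤ κ) :
    4 / (4 - ((κ - 1) / (κ + 1)) ^ 2 * lowerFixedPoint κ) = lowerFixedPoint κ := by
  obtain ⟨s, hs, rfl⟩ : ∃ s, 0 ≤ s ∧ κ = s ^ 2 := ⟨√κ, sqrt_nonneg κ, (sq_sqrt hκ).symm⟩
  rw [lowerFixedPoint, sqrt_sq hs]
  have hden : 4 - ((s ^ 2 - 1) / (s ^ 2 + 1)) ^ 2 * (2 * (s ^ 2 + 1) / (1 + s) ^ 2)
      = 2 * (1 + s) ^ 2 / (s ^ 2 + 1) := by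
    field_simp
    ring
  rw [hden]
  field_simp
  norm_num

theorem strictMonoOn_lowerFixedPoint : StrictMonoOn lowerFixedPoint (Ici 1) := by
  intro x hx y hy hxy
  have hx0 : 0 ≤ x := zero_le_one.trans hx
  have hsx : 1 ≤ √x := one_le_sqrt.mpr hx
  have hsxy : √x < √y := sqrt_lt_sqrt hx0 hxy
  rw [lowerFixedPoint, lowerFixedPoint, div_lt_div_iff₀ (by positivity) (by positivity)]
  -- with `a = √x`, `b = √y` the difference of the cross products is `4 (b - a)(ab - 1)`
  nlinarith [sq_sqrt hx0, sq_sqrt (hx0.trans hxy.le),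
    mul_pos (sub_pos.mpr hsxy) (by nlinarith : 0 < √x * √y - 1)]

theorem lowerFixedPoint_nine : lowerFixedPoint 9 = 5 / 4 := by
  rw [lowerFixedPoint, show (9 : ℝ) = 3 ^ 2 by norm_num, sqrt_sq (by norm_num)]
  norm_num

theorem five_div_four_le_lowerFixedPoint (hκ : 9 ≤ κ) : 5 / 4 ≤ lowerFixedPoint κ := by
  rw [← lowerFixedPoint_nine]
  exact strictMonoOn_lowerFixedPoint.monotoneOn (by norm_num : (9 : ℝ) ∈ Ici 1)
    (by simp only [mem_Ici]; linarith) hκ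

end LowerFixedPoint

section ChebyshevStep

variable {ρ a : ℝ}

theorem four_div_four_sub_mul_mem_Icc (hρ : ρ ^ 2 ≤ 1) (ha : a ≤ 4 / (4 - ρ ^ 2 * a))
    {w : ℝ} (hw : w ∈ Icc a 2) : 4 / (4 - ρ ^ 2 * w) ∈ Icc a 2 := by
  have hρw : ρ ^ 2 * a ≤ ρ ^ 2 * w := mul_le_mul_of_nonneg_left hw.1 (sq_nonneg ρ)
  have hden : 2 ≤ 4 - ρ ^ 2 * w := by nlinarith [sq_nonneg ρ, hw.2]
  constructor
  · exact ha.trans (div_le_div_of_nonneg_left (by norm_num) (by linarith) (by linarith))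
  · rw [div_le_iff₀ (by linarith)]
    linarith

theorem mem_Icc_of_chebyshev_rec (hρ : ρ ^ 2 ≤ 1) (ha : a ≤ 4 / (4 - ρ ^ 2 * a))
    (ha2 : a ≤ 2) {ω : ℕ → ℝ} (hω0 : ω 0 = 2) (hωrec : ∀ i, ω (i + 1) = 4 / (4 - ρ ^ 2 * ω i)) :
    ∀ i, ω i ∈ Icc a 2
  | 0 => by rw [hω0]; exact ⟨ha2, le_rfl⟩
  | i + 1 => hωrec i ▸
      four_div_four_sub_mul_mem_Icc hρ ha (mem_Icc_of_chebyshev_rec hρ ha ha2 hω0 hωrec i)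

end ChebyshevStep

/-- With `ρ = (κ−1)/(κ+1)`, the lower fixed point satisfies
`ω₁* = 2(1 − √(1 − ρ²))/ρ² = 2(κ+1)/(1 + √κ)²`; the function
`κ ↦ 2(κ+1)/(1 + √κ)²` is strictly increasing on `(1, ∞)`; and for `κ ≥ 10`
one has `ω₁* ≥ 5/4`, so that all Chebyshev weights satisfy
`ω_i − 1 ∈ [1/4, 1]` for `i ≥ 1`. -/
theorem chebyshev_lower_fixed_point_properties (κ : ℝ) (hκ : 1 < κ)
    (ρ : ℝ) (hρ : ρ = (κ - 1) / (κ + 1))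
    (ω : ℕ → ℝ) (hω0 : ω 0 = 2)
    (hωrec : ∀ i, ω (i + 1) = 4 / (4 - ρ ^ 2 * ω i)) :
    let ωstar := 2 * (1 - Real.sqrt (1 - ρ ^ 2)) / ρ ^ 2
    ωstar = 2 * (κ + 1) / (1 + Real.sqrt κ) ^ 2 ∧
      StrictMonoOn (fun x : ℝ => 2 * (x + 1) / (1 + Real.sqrt x) ^ 2) (Set.Ioi 1) ∧
      (10 ≤ κ → 5 / 4 ≤ ωstar) ∧
      (10 ≤ κ → ∀ i, 1 ≤ i → ω i - 1 ∈ Set.Icc (1 / 4 : ℝ) 1) := by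
  intro ωstar
  subst hρ
  have hκ0 : 0 ≤ κ := zero_le_one.trans hκ.le
  have hωstar : ωstar = lowerFixedPoint κ :=
    two_mul_one_sub_sqrt_div_eq_lowerFixedPoint hκ0 hκ.ne'
  refine ⟨hωstar, strictMonoOn_lowerFixedPoint.mono Ioi_subset_Ici_self,
    fun h10 => hωstar ▸ five_div_four_le_lowerFixedPoint (by linarith), fun h10 i _ => ?_⟩
  have hωi := mem_Icc_of_chebyshev_rec (sub_div_add_sq_le_one hκ0)
    (four_div_four_sub_mul_lowerFixedPoint hκ0).ge (lowerFixedPoint_le_two hκ0) hω0 hωrec i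
  have h54 := five_div_four_le_lowerFixedPoint (κ := κ) (by linarith)
  exact ⟨by linarith [hωi.1], by linarith [hωi.2]⟩
end

section
/- The Chebyshev Iteration map is self-adjoint when H is symmetric: let CH_r(H, q) denote the r-th Chebyshev iterate ξ_r with input q. Then for all q, g ∈ ℝ^D, ⟨CH_r(H, q), g⟩ = ⟨q, CH_r(H, g)⟩ in the Euclidean inner product. Consequently, the exact gradient with respect to q of any linear functional q ↦ ⟨g, CH_r(H, q)⟩ equals CH_r(H, g), i.e., the implicit-differentiation gradient obtained by re-running Chebyshev Iteration on the upstream gradient coincides with the true gradient. -/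
/-!
Unrolling the recurrence shows that every Chebyshev iterate is `ξ_r = P_r(H) q` for a
polynomial `P_r` whose coefficients depend only on `L`, `μ` and the weights `ω`, not on `q`.
A polynomial in a symmetric matrix is symmetric, so `q ↦ ξ_r` is a self-adjoint linear map;
the functional `q ↦ ⟨g, P_r(H) q⟩ = ⟨P_r(H) g, q⟩` is then linear, and its gradient is
`P_r(H) g = CH_r(H, g)`.
-/

open Matrix Polynomial

namespace Matrix

variable {n R : Type*} [Fintype n] [CommSemiring R]

theorem IsSymm.mulVec_dotProduct {A : Matrix n n R} (hA : A.IsSymm) (v w : n → R) :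
    A *ᵥ v ⬝ᵥ w = v ⬝ᵥ A *ᵥ w := by
  rw [dotProduct_comm, ← dotProduct_transpose_mulVec, hA.eq]

theorem IsSymm.aeval [DecidableEq n] {A : Matrix n n R} (hA : A.IsSymm) (p : R[X]) :
    (aeval A p).IsSymm := by
  induction p using Polynomial.induction_on' with
  | add p q hp hq => simpa only [map_add] using hp.add hq
  | monomial k a =>
    simpa only [aeval_monomial, Algebra.algebraMap_eq_smul_one, smul_mul, one_mul]
      using (hA.pow k).smul a

end Matrix

section MomentumIteration

variable {n R : Type*} [Fintype n] [DecidableEq n] [CommRing R]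

/-- Polynomials of the iteration `x_k = x_{k-1} - a_k (H x_{k-1} - q) + b_k (x_{k-1} - x_{k-2})`,
`x_{-1} = 0`, `x_0 = c q`, shifted by one: `x_k = (momentumPoly c a b (k + 1))(H) q`. -/
noncomputable def momentumPoly (c : R) (a b : ℕ → R) : ℕ → R[X]
  | 0 => 0
  | 1 => C c
  | k + 2 => momentumPoly c a b (k + 1) - C (a (k + 1)) * (X * momentumPoly c a b (k + 1) - 1)
      + C (b (k + 1)) * (momentumPoly c a b (k + 1) - momentumPoly c a b k)

theorem mulVec_aeval_momentumPoly_add_two (H : Matrix n n R) (c : R) (a b : ℕ → R)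
    (q : n → R) (k : ℕ) :
    aeval H (momentumPoly c a b (k + 2)) *ᵥ q =
      aeval H (momentumPoly c a b (k + 1)) *ᵥ q
        - a (k + 1) • (H *ᵥ (aeval H (momentumPoly c a b (k + 1)) *ᵥ q) - q)
        + b (k + 1) • (aeval H (momentumPoly c a b (k + 1)) *ᵥ q
          - aeval H (momentumPoly c a b k) *ᵥ q) := by
  simp only [momentumPoly, map_add, map_sub, map_mul, map_one, aeval_C, aeval_X,
    Algebra.algebraMap_eq_smul_one, smul_mul, one_mul, add_mulVec, sub_mulVec, smul_mulVec,
    one_mulVec, mulVec_mulVec]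

theorem eq_mulVec_aeval_momentumPoly (H : Matrix n n R) (c : R) (a b : ℕ → R)
    (x : ℕ → n → R) (q : n → R) (h₀ : x 0 = c • q)
    (h₁ : x 1 = x 0 - a 1 • (H *ᵥ x 0 - q) + b 1 • (x 0 - 0))
    (hrec : ∀ k, x (k + 2) =
      x (k + 1) - a (k + 2) • (H *ᵥ x (k + 1) - q) + b (k + 2) • (x (k + 1) - x k))
    (k : ℕ) : x k = aeval H (momentumPoly c a b (k + 1)) *ᵥ q := by
  have hx₀ : x 0 = aeval H (momentumPoly c a b 1) *ᵥ q := by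
    simp only [h₀, momentumPoly, aeval_C, Algebra.algebraMap_eq_smul_one, smul_mulVec,
      one_mulVec]
  induction k using Nat.twoStepInduction with
  | zero => exact hx₀
  | one =>
    rw [mulVec_aeval_momentumPoly_add_two, h₁, ← hx₀]
    simp only [momentumPoly, map_zero, zero_mulVec]
  | more k ih₀ ih₁ =>
    rw [hrec, ih₀, ih₁]
    exact (mulVec_aeval_momentumPoly_add_two H c a b q (k + 1)).symm

end MomentumIteration

theorem chebyshev_self_adjoint_implicit_grad_general (D : ℕ)
    (H : Matrix (Fin D) (Fin D) ℝ) (hH : H.IsSymm)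
    (L μ : ℝ)
    (ω : ℕ → ℝ)
    (ξ : (Fin D → ℝ) → ℕ → (Fin D → ℝ))
    (hξ0 : ∀ q, ξ q 0 = (2 / (L + μ)) • q)
    (hξ1 : ∀ q, ξ q 1 =
      ξ q 0 - (2 * ω 1 / (L + μ)) • (H *ᵥ ξ q 0 - q) + (ω 1 - 1) • (ξ q 0 - 0))
    (hξrec : ∀ q i, 2 ≤ i → ξ q i =
      ξ q (i - 1) - (2 * ω i / (L + μ)) • (H *ᵥ ξ q (i - 1) - q)
        + (ω i - 1) • (ξ q (i - 1) - ξ q (i - 2)))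
    (r : ℕ) :
    (∀ q g : Fin D → ℝ, ξ q r ⬝ᵥ g = q ⬝ᵥ ξ g r) ∧
      (∀ g : Fin D → ℝ, ∃ Lmap : (Fin D → ℝ) →L[ℝ] ℝ,
        (∀ u, Lmap u = ξ g r ⬝ᵥ u) ∧
          ∀ q₀ : Fin D → ℝ, HasFDerivAt (fun q => g ⬝ᵥ ξ q r) Lmap q₀) := by
  have hξ (q : Fin D → ℝ) := eq_mulVec_aeval_momentumPoly H (2 / (L + μ))
    (fun i => 2 * ω i / (L + μ)) (fun i => ω i - 1) (ξ q) q (hξ0 q) (hξ1 q)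
    (fun k => hξrec q (k + 2) le_add_self) r
  have hadj (q g : Fin D → ℝ) : ξ q r ⬝ᵥ g = q ⬝ᵥ ξ g r := by
    rw [hξ q, hξ g]
    exact (hH.aeval _).mulVec_dotProduct q g
  refine ⟨hadj, fun g => ⟨(dotProductBilin ℝ ℝ (ξ g r)).toContinuousLinearMap,
    fun u => rfl, fun q₀ => ?_⟩⟩
  have hlin : (fun q => g ⬝ᵥ ξ q r) = (dotProductBilin ℝ ℝ (ξ g r)).toContinuousLinearMap :=
    funext fun q => by rw [dotProduct_comm, hadj, dotProduct_comm]; rfl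
  rw [hlin]
  exact ContinuousLinearMap.hasFDerivAt _

/-- The Chebyshev Iteration map is self-adjoint when `H` is
symmetric: `⟨CH_r(H, q), g⟩ = ⟨q, CH_r(H, g)⟩` for all `q, g`; consequently the
exact gradient with respect to `q` of the linear functional
`q ↦ ⟨g, CH_r(H, q)⟩` equals `CH_r(H, g)`. -/
theorem chebyshev_self_adjoint_implicit_grad (D : ℕ)
    (H : Matrix (Fin D) (Fin D) ℝ) (hH : H.IsSymm)
    (L μ : ℝ) (hμ : 0 < μ) (hLμ : μ ≤ L)
    (ρ : ℝ) (hρ : ρ = (L - μ) / (L + μ))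
    (ω : ℕ → ℝ) (hω0 : ω 0 = 2)
    (hωrec : ∀ i, ω (i + 1) = 4 / (4 - ρ ^ 2 * ω i))
    (ξ : (Fin D → ℝ) → ℕ → (Fin D → ℝ))
    (hξ0 : ∀ q, ξ q 0 = (2 / (L + μ)) • q)
    (hξ1 : ∀ q, ξ q 1 =
      ξ q 0 - (2 * ω 1 / (L + μ)) • (H *ᵥ ξ q 0 - q) + (ω 1 - 1) • (ξ q 0 - 0))
    (hξrec : ∀ q i, 2 ≤ i → ξ q i =
      ξ q (i - 1) - (2 * ω i / (L + μ)) • (H *ᵥ ξ q (i - 1) - q)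
        + (ω i - 1) • (ξ q (i - 1) - ξ q (i - 2)))
    (r : ℕ) :
    (∀ q g : Fin D → ℝ, ξ q r ⬝ᵥ g = q ⬝ᵥ ξ g r) ∧
      (∀ g : Fin D → ℝ, ∃ Lmap : (Fin D → ℝ) →L[ℝ] ℝ,
        (∀ u, Lmap u = ξ g r ⬝ᵥ u) ∧
          ∀ q₀ : Fin D → ℝ, HasFDerivAt (fun q => g ⬝ᵥ ξ q r) Lmap q₀) :=
  chebyshev_self_adjoint_implicit_grad_general D H hH L μ ω ξ hξ0 hξ1 hξrec r
end

section
/- Intra-chunk decomposition of the backward matrix recursion: define B_i = Σ_{c=i}^C M_{i,c}·w_c·H_c for i = 1, …, C. Then B_i = (Σ_{c=i}^C M_{i,c} w_c ζ_c)·H₀ + Σ_{j=1}^C [M diag(w₁,…,w_C) Mᵀ]_{i,j} · k_j k_jᵀ, where M is the C×C matrix with entries M_{j,c}. -/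
/-!
Unrolling `H_c = γ_c H_{c-1} + k_c k_cᵀ` gives `H_c = ζ_c H₀ + ∑_{j ≤ c} M_{j,c} k_j k_jᵀ`: the
coefficient of `k_j k_jᵀ` picks up one factor `γ` per step, and `M_{j,c+1} = γ_{c+1} M_{j,c}`.
Substituting into `B_i` and exchanging the two sums gives the claim, because `M_{i,c} = 0` for
`c < i` lets every sum run over the whole chunk `1, …, C`.
-/

open Matrix Finset

section Recurrence

variable {𝕜 V : Type*} [Field 𝕜] [AddCommGroup V] [Module 𝕜 V]

def cumProd (γ : ℕ → 𝕜) (c : ℕ) : 𝕜 := ∏ i ∈ Icc 1 c, γ i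

def transferCoeff (γ : ℕ → 𝕜) (j c : ℕ) : 𝕜 := if j ≤ c then cumProd γ c / cumProd γ j else 0

theorem cumProd_zero (γ : ℕ → 𝕜) : cumProd γ 0 = 1 := by
  simp [cumProd]

theorem cumProd_succ (γ : ℕ → 𝕜) (n : ℕ) : cumProd γ (n + 1) = γ (n + 1) * cumProd γ n := by
  rw [cumProd, prod_Icc_succ_top (by omega), mul_comm, cumProd]

theorem cumProd_ne_zero {γ : ℕ → 𝕜} {C c : ℕ} (hγ : ∀ i ∈ Icc 1 C, γ i ≠ 0) (hc : c ≤ C) :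
    cumProd γ c ≠ 0 :=
  prod_ne_zero_iff.2 fun i hi => hγ i (Icc_subset_Icc_right hc hi)

theorem transferCoeff_self {γ : ℕ → 𝕜} {c : ℕ} (hc : cumProd γ c ≠ 0) :
    transferCoeff γ c c = 1 := by
  simp [transferCoeff, hc]

theorem transferCoeff_of_lt (γ : ℕ → 𝕜) {j c : ℕ} (h : c < j) : transferCoeff γ j c = 0 := by
  simp [transferCoeff, h.not_ge]

theorem transferCoeff_succ (γ : ℕ → 𝕜) {j c : ℕ} (h : j ≤ c) :
    transferCoeff γ j (c + 1) = γ (c + 1) * transferCoeff γ j c := by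
  simp only [transferCoeff, h, h.trans c.le_succ, if_true, cumProd_succ, mul_div_assoc]

theorem eq_cumProd_smul_add_sum_of_recurrence {γ : ℕ → 𝕜} {H x : ℕ → V} {C : ℕ}
    (hγ : ∀ i ∈ Icc 1 C, γ i ≠ 0)
    (hrec : ∀ c, 1 ≤ c → c ≤ C → H c = γ c • H (c - 1) + x c) :
    ∀ c ≤ C, H c = cumProd γ c • H 0 + ∑ j ∈ Icc 1 c, transferCoeff γ j c • x j := by
  intro c hc
  induction c with
  | zero => simp [cumProd_zero]
  | succ n ih =>
    have hsum : γ (n + 1) • ∑ j ∈ Icc 1 n, transferCoeff γ j n • x j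
        = ∑ j ∈ Icc 1 n, transferCoeff γ j (n + 1) • x j := by
      rw [smul_sum]
      refine sum_congr rfl fun j hj => ?_
      rw [smul_smul, transferCoeff_succ γ (mem_Icc.1 hj).2]
    rw [hrec (n + 1) (by omega) hc, Nat.add_sub_cancel, ih (by omega), smul_add, smul_smul,
      hsum, sum_Icc_succ_top (by omega), transferCoeff_self (cumProd_ne_zero hγ hc), one_smul,
      cumProd_succ]
    abel

theorem eq_cumProd_smul_add_sum_Icc_of_recurrence {γ : ℕ → 𝕜} {H x : ℕ → V} {C : ℕ}
    (hγ : ∀ i ∈ Icc 1 C, γ i ≠ 0)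
    (hrec : ∀ c, 1 ≤ c → c ≤ C → H c = γ c • H (c - 1) + x c) :
    ∀ c ≤ C, H c = cumProd γ c • H 0 + ∑ j ∈ Icc 1 C, transferCoeff γ j c • x j := by
  intro c hc
  rw [eq_cumProd_smul_add_sum_of_recurrence hγ hrec c hc,
    sum_subset (Icc_subset_Icc_right hc) fun j hj hjc => ?_]
  rw [transferCoeff_of_lt γ (by simp only [mem_Icc] at hj hjc; omega), zero_smul]

end Recurrence

theorem backward_matrix_recursion_intra_chunk_general (D C : ℕ)
    (k : ℕ → Fin D → ℝ) (γ : ℕ → ℝ)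
    (hγ : ∀ i ∈ Finset.Icc 1 C, 0 < γ i) (w : ℕ → ℝ)
    (H : ℕ → Matrix (Fin D) (Fin D) ℝ)
    (hrec : ∀ c, 1 ≤ c → c ≤ C → H c = γ c • H (c - 1) + vecMulVec (k c) (k c)) :
    let ζ : ℕ → ℝ := fun c => ∏ i ∈ Finset.Icc 1 c, γ i
    let M : ℕ → ℕ → ℝ := fun j c => if j ≤ c then ζ c / ζ j else 0
    let B : ℕ → Matrix (Fin D) (Fin D) ℝ :=
      fun i => ∑ c ∈ Finset.Icc i C, (M i c * w c) • H c
    ∀ i, 1 ≤ i → i ≤ C →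
      B i = (∑ c ∈ Finset.Icc i C, M i c * w c * ζ c) • H 0
        + ∑ j ∈ Finset.Icc 1 C,
            (∑ c ∈ Finset.Icc 1 C, M i c * w c * M j c) • vecMulVec (k j) (k j) := by
  intro ζ M B i hi _
  have hζ : ζ = cumProd γ := rfl
  have hM : M = transferCoeff γ := rfl
  have hH := eq_cumProd_smul_add_sum_Icc_of_recurrence (fun i hi => (hγ i hi).ne') hrec
  have hextend : ∑ c ∈ Icc i C, ∑ j ∈ Icc 1 C, (M i c * w c * M j c) • vecMulVec (k j) (k j)
      = ∑ c ∈ Icc 1 C, ∑ j ∈ Icc 1 C, (M i c * w c * M j c) • vecMulVec (k j) (k j) :=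
    sum_subset (Icc_subset_Icc_left hi) fun c hc hci => by
      have hlt : c < i := by simp only [mem_Icc] at hc hci; omega
      simp [hM, transferCoeff_of_lt γ hlt]
  calc B i
      = ∑ c ∈ Icc i C, ((M i c * w c * ζ c) • H 0
          + ∑ j ∈ Icc 1 C, (M i c * w c * M j c) • vecMulVec (k j) (k j)) :=
        sum_congr rfl fun c hc => by
          rw [hH c (mem_Icc.1 hc).2, smul_add, smul_smul, smul_sum, hζ, hM]
          simp only [smul_smul]
    _ = _ := by
        rw [sum_add_distrib, ← sum_smul, hextend, sum_comm]
        simp only [sum_smul]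

/-- Intra-chunk decomposition of the backward matrix
recursion: with `B_i = ∑_{c=i}^C M_{i,c} w_c H_c`, one has
`B_i = (∑_{c=i}^C M_{i,c} w_c ζ_c) H₀
  + ∑_{j=1}^C [M diag(w) Mᵀ]_{i,j} k_j k_jᵀ`. -/
theorem backward_matrix_recursion_intra_chunk (D C : ℕ)
    (k : ℕ → Fin D → ℝ) (γ : ℕ → ℝ)
    (hγ : ∀ i ∈ Finset.Icc 1 C, 0 < γ i) (w : ℕ → ℝ)
    (H : ℕ → Matrix (Fin D) (Fin D) ℝ) (hH0 : (H 0).IsSymm)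
    (hrec : ∀ c, 1 ≤ c → c ≤ C → H c = γ c • H (c - 1) + vecMulVec (k c) (k c)) :
    let ζ : ℕ → ℝ := fun c => ∏ i ∈ Finset.Icc 1 c, γ i
    let M : ℕ → ℕ → ℝ := fun j c => if j ≤ c then ζ c / ζ j else 0
    let B : ℕ → Matrix (Fin D) (Fin D) ℝ :=
      fun i => ∑ c ∈ Finset.Icc i C, (M i c * w c) • H c
    ∀ i, 1 ≤ i → i ≤ C →
      B i = (∑ c ∈ Finset.Icc i C, M i c * w c * ζ c) • H 0
        + ∑ j ∈ Finset.Icc 1 C,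
            (∑ c ∈ Finset.Icc 1 C, M i c * w c * M j c) • vecMulVec (k j) (k j) :=
  backward_matrix_recursion_intra_chunk_general D C k γ hγ w H hrec
end

section
/- Gradient with respect to a key through the adaptively regularized solves (Lemma 1): fix an index i, gates and masks as below, and vectors q_t, g_t ∈ ℝ^D for t = i, …, T. For k ∈ ℝ^D, let H_t(k) = Σ_{j=1}^t M_{j,t}·k_j k_jᵀ with the i-th key k_i replaced by the variable k, let λ_t(k) = a·‖H_t(k)‖_F, and define the scalar function L(k) = Σ_{t=i}^T ⟨g_t, (H_t(k) + λ_t(k) I)⁻¹ q_t⟩. If at the point k₀ every H_t(k₀) (t ≥ i) is nonzero (so that H_t(k₀) + λ_t(k₀)I is positive definite), then L is differentiable at k₀ with gradient ∇L(k₀) = Σ_{t=i}^T M_{i,t} · ( −dq_t x_tᵀ − x_t dq_tᵀ − w_t H_t(k₀) ) · k₀, where x_t = (H_t(k₀) + λ_t(k₀)I)⁻¹ q_t, dq_t = (H_t(k₀) + λ_t(k₀)I)⁻¹ g_t, and w_t = 2a·⟨x_t, dq_t⟩ / ‖H_t(k₀)‖_F. -/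
/-!
Each summand of `L` has the form `k ↦ gᵀ (H + a‖H‖_F I)⁻¹ q` with `H = m k kᵀ + C`, where
`m = M_{i,t} ≥ 0` and `C = ∑_{j ≠ i} M_{j,t} k_j k_jᵀ` is positive semidefinite because the gates
are positive. It is differentiated by the chain rule through three maps: `k ↦ m k kᵀ + C`, with
derivative `u ↦ m (k₀uᵀ + uk₀ᵀ)`; `H ↦ H + a‖H‖_F I`, where `‖·‖_F` is differentiable away from
`0` with derivative `⟨H, ·⟩_F / ‖H‖_F`; and `A ↦ gᵀ A⁻¹ q`, with derivative
`dA ↦ -gᵀ A⁻¹ dA A⁻¹ q`, valid since `H + a‖H‖_F I` is positive definite for `H ⪰ 0`, `H ≠ 0`.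
The symmetry of `H` and of `A⁻¹` then turns the chain-rule expression into the stated gradient.
-/

open Matrix Finset

/-- The Frobenius norm of a real `D × D` matrix. -/
noncomputable def frobNorm {D : ℕ} (A : Matrix (Fin D) (Fin D) ℝ) : ℝ :=
  Real.sqrt (∑ i, ∑ j, (A i j) ^ 2)

-- Matrices are finite-dimensional, so any norm gives the same derivatives; this one makes them a
-- normed algebra, which the derivative of inversion needs.
attribute [local instance] Matrix.linftyOpNormedAddCommGroup Matrix.linftyOpNormedSpace
  Matrix.linftyOpNormedRing Matrix.linftyOpNormedAlgebra

section

variable {m n : Type*} [Fintype m] [Fintype n]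

def frobInner (A B : Matrix m n ℝ) : ℝ := ∑ p, ∑ r, A p r * B p r

theorem frobInner_comm (A B : Matrix m n ℝ) : frobInner A B = frobInner B A := by
  simp only [frobInner, mul_comm]

theorem frobInner_self_pos {A : Matrix m n ℝ} (hA : A ≠ 0) : 0 < frobInner A A := by
  obtain ⟨p, r, hpr⟩ : ∃ p r, A p r ≠ 0 := by
    by_contra! h
    exact hA (Matrix.ext h)
  refine sum_pos' (fun _ _ => sum_nonneg fun _ _ => mul_self_nonneg _) ⟨p, mem_univ _, ?_⟩
  exact sum_pos' (fun _ _ => mul_self_nonneg _) ⟨r, mem_univ _, mul_self_pos.2 hpr⟩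

theorem frobInner_vecMulVec (A : Matrix m n ℝ) (v : m → ℝ) (w : n → ℝ) :
    frobInner A (vecMulVec v w) = v ⬝ᵥ (A *ᵥ w) := by
  simp only [frobInner, vecMulVec_apply, dotProduct, mulVec, mul_sum]
  exact sum_congr rfl fun p _ => sum_congr rfl fun r _ => by ring

def frobInnerBilin : Matrix m n ℝ →ₗ[ℝ] Matrix m n ℝ →ₗ[ℝ] ℝ :=
  LinearMap.mk₂ ℝ frobInner
    (fun _ _ _ => by simp only [frobInner, Matrix.add_apply, add_mul, sum_add_distrib])
    (fun _ _ _ => by simp only [frobInner, Matrix.smul_apply, smul_eq_mul, mul_sum, mul_assoc])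
    (fun _ _ _ => by simp only [frobInner, Matrix.add_apply, mul_add, sum_add_distrib])
    (fun _ _ _ => by simp only [frobInner, Matrix.smul_apply, smul_eq_mul, mul_sum, mul_left_comm])

theorem frobInnerBilin_apply (A B : Matrix m n ℝ) : frobInnerBilin A B = frobInner A B := rfl

end

section

variable {n : Type*} [Fintype n]

theorem posSemidef_smul_vecMulVec_self {c : ℝ} (hc : 0 ≤ c) (v : n → ℝ) :
    (c • vecMulVec v v).PosSemidef := by
  simpa using (posSemidef_vecMulVec_self_star v).smul hc

theorem exists_hasFDerivAt_vecMulVec_self (v : n → ℝ) :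
    ∃ L : (n → ℝ) →L[ℝ] Matrix n n ℝ, (∀ u, L u = vecMulVec v u + vecMulVec u v) ∧
      HasFDerivAt (fun w => vecMulVec w w) L v := by
  let B : (n → ℝ) →ₗ[ℝ] (n → ℝ) →ₗ[ℝ] Matrix n n ℝ := vecMulVecBilin ℝ ℝ
  exact ⟨_, fun _ => rfl,
    B.toContinuousBilinearMap.hasFDerivAt_of_bilinear (hasFDerivAt_id v) (hasFDerivAt_id v)⟩

variable [DecidableEq n] {E : Type*} [NormedAddCommGroup E] [NormedSpace ℝ E]

theorem exists_hasFDerivAt_dotProduct_inv_mulVec {A : E → Matrix n n ℝ}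
    {A' : E →L[ℝ] Matrix n n ℝ} {x : E} (hA : HasFDerivAt A A' x) (hx : IsUnit (A x))
    (g q : n → ℝ) :
    ∃ L : E →L[ℝ] ℝ, (∀ u, L u = -((g ᵥ* (A x)⁻¹) ⬝ᵥ (A' u *ᵥ ((A x)⁻¹ *ᵥ q)))) ∧
      HasFDerivAt (fun y => g ⬝ᵥ ((A y)⁻¹ *ᵥ q)) L x := by
  have hinv : HasFDerivAt (fun y => (A y)⁻¹)
      ((-ContinuousLinearMap.mulLeftRight ℝ _ (A x)⁻¹ (A x)⁻¹).comp A') x := by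
    have h := hasFDerivAt_ringInverse (𝕜 := ℝ) hx.unit
    rw [coe_units_inv, IsUnit.unit_spec] at h
    simpa only [Function.comp_def, ← nonsing_inv_eq_ringInverse] using h.comp x hA
  let Φ : Matrix n n ℝ →ₗ[ℝ] ℝ := dotProductBilin ℝ ℝ g ∘ₗ (mulVecBilin ℝ ℝ).flip q
  refine ⟨_, fun u => ?_, Φ.toContinuousLinearMap.hasFDerivAt.comp x hinv⟩
  change g ⬝ᵥ (-((A x)⁻¹ * A' u * (A x)⁻¹) *ᵥ q) = _
  rw [neg_mulVec, dotProduct_neg, ← mulVec_mulVec, ← mulVec_mulVec, dotProduct_mulVec]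

end

section

variable {D : ℕ}

theorem frobNorm_eq_sqrt_frobInner (A : Matrix (Fin D) (Fin D) ℝ) :
    frobNorm A = Real.sqrt (frobInner A A) := by
  simp only [frobNorm, frobInner, sq]

theorem frobNorm_pos {A : Matrix (Fin D) (Fin D) ℝ} (hA : A ≠ 0) : 0 < frobNorm A := by
  rw [frobNorm_eq_sqrt_frobInner]
  exact Real.sqrt_pos.2 (frobInner_self_pos hA)

theorem exists_hasFDerivAt_frobNorm {A : Matrix (Fin D) (Fin D) ℝ} (hA : A ≠ 0) :
    ∃ N : Matrix (Fin D) (Fin D) ℝ →L[ℝ] ℝ, (∀ B, N B = frobInner A B / frobNorm A) ∧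
      HasFDerivAt frobNorm N A := by
  let B : Matrix (Fin D) (Fin D) ℝ →ₗ[ℝ] Matrix (Fin D) (Fin D) ℝ →ₗ[ℝ] ℝ := frobInnerBilin
  have hsq := B.toContinuousBilinearMap.hasFDerivAt_of_bilinear (hasFDerivAt_id A)
    (hasFDerivAt_id A)
  rw [funext frobNorm_eq_sqrt_frobInner]
  refine ⟨_, fun B => ?_, hsq.sqrt (frobInner_self_pos hA).ne'⟩
  change 1 / (2 * √(frobInner A A)) * (frobInner A B + frobInner B A) =
    frobInner A B / √(frobInner A A)
  rw [frobInner_comm B A]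
  field_simp
  ring

noncomputable def regularize (a : ℝ) (H : Matrix (Fin D) (Fin D) ℝ) : Matrix (Fin D) (Fin D) ℝ :=
  H + (a * frobNorm H) • 1

theorem Matrix.PosSemidef.posDef_regularize {H : Matrix (Fin D) (Fin D) ℝ} (hH : H.PosSemidef)
    (h0 : H ≠ 0) {a : ℝ} (ha : 0 < a) : (regularize a H).PosDef :=
  PosDef.posSemidef_add hH (PosDef.one.smul (mul_pos ha (frobNorm_pos h0)))

theorem exists_hasFDerivAt_dotProduct_regularize_inv_mulVec {E : Type*} [NormedAddCommGroup E]
    [NormedSpace ℝ E] {H : E → Matrix (Fin D) (Fin D) ℝ} {H' : E →L[ℝ] Matrix (Fin D) (Fin D) ℝ}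
    {x : E} (hH : HasFDerivAt H H' x) (hpsd : (H x).PosSemidef) (h0 : H x ≠ 0) {a : ℝ}
    (ha : 0 < a) (g q : Fin D → ℝ) :
    let R := (regularize a (H x))⁻¹
    ∃ L : E →L[ℝ] ℝ, (∀ u, L u = -((R *ᵥ g) ⬝ᵥ (H' u *ᵥ (R *ᵥ q))) -
        a * ((R *ᵥ q) ⬝ᵥ (R *ᵥ g)) / frobNorm (H x) * frobInner (H x) (H' u)) ∧
      HasFDerivAt (fun y => g ⬝ᵥ ((regularize a (H y))⁻¹ *ᵥ q)) L x := by
  intro R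
  have hpd := hpsd.posDef_regularize h0 ha
  have hR : g ᵥ* R = R *ᵥ g := by
    rw [← mulVec_transpose, (isHermitian_iff_isSymm.mp hpd.inv.isHermitian).eq]
  obtain ⟨N, hN, hNderiv⟩ := exists_hasFDerivAt_frobNorm h0
  have hreg : HasFDerivAt (fun y => regularize a (H y)) (H' + (a • N.comp H').smulRight 1) x :=
    hH.add (((hNderiv.comp x hH).const_mul a).smul_const 1)
  obtain ⟨L, hL, hLderiv⟩ := exists_hasFDerivAt_dotProduct_inv_mulVec hreg hpd.isUnit g q
  refine ⟨L, fun u => ?_, hLderiv⟩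
  have hreg' : (H' + (a • N.comp H').smulRight (1 : Matrix (Fin D) (Fin D) ℝ)) u =
      H' u + (a * N (H' u)) • 1 := rfl
  rw [hL, hR, hreg', hN, add_mulVec, smul_mulVec, one_mulVec, dotProduct_add, dotProduct_smul,
    smul_eq_mul, dotProduct_comm (R *ᵥ g) (R *ᵥ q)]
  ring

theorem exists_hasFDerivAt_dotProduct_regularize_inv_mulVec_rankOne {m a : ℝ} (hm : 0 ≤ m)
    (ha : 0 < a) {C : Matrix (Fin D) (Fin D) ℝ} (hC : C.PosSemidef)
    {H : (Fin D → ℝ) → Matrix (Fin D) (Fin D) ℝ} (hH : ∀ v, H v = m • vecMulVec v v + C)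
    {k₀ : Fin D → ℝ} (h0 : H k₀ ≠ 0) (g q : Fin D → ℝ) :
    let x := (regularize a (H k₀))⁻¹ *ᵥ q
    let dq := (regularize a (H k₀))⁻¹ *ᵥ g
    let w := 2 * a * (x ⬝ᵥ dq) / frobNorm (H k₀)
    ∃ L : (Fin D → ℝ) →L[ℝ] ℝ,
      (∀ u, L u = (m • ((-vecMulVec dq x - vecMulVec x dq - w • H k₀) *ᵥ k₀)) ⬝ᵥ u) ∧
      HasFDerivAt (fun v => g ⬝ᵥ ((regularize a (H v))⁻¹ *ᵥ q)) L k₀ := by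
  intro x dq w
  have hpsd : (H k₀).PosSemidef := hH k₀ ▸ (posSemidef_smul_vecMulVec_self hm k₀).add hC
  have hsymm : (H k₀)ᵀ = H k₀ := (isHermitian_iff_isSymm.mp hpsd.isHermitian).eq
  obtain ⟨V, hV, hVderiv⟩ := exists_hasFDerivAt_vecMulVec_self k₀
  have hHderiv : HasFDerivAt H (m • V) k₀ := by
    rw [funext hH]
    exact (hVderiv.const_smul m).add_const C
  obtain ⟨L, hL, hLderiv⟩ :=
    exists_hasFDerivAt_dotProduct_regularize_inv_mulVec hHderiv hpsd h0 ha g q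
  refine ⟨L, fun u => ?_, hLderiv⟩
  have hH' : (m • V) u = m • (vecMulVec k₀ u + vecMulVec u k₀) := by rw [← hV]; rfl
  have hF : frobInner (H k₀) ((m • V) u) = 2 * m * ((H k₀ *ᵥ k₀) ⬝ᵥ u) := by
    change frobInnerBilin (H k₀) _ = _
    rw [hH', map_smul, map_add]
    simp only [frobInnerBilin_apply, frobInner_vecMulVec, smul_eq_mul]
    rw [dotProduct_mulVec, ← mulVec_transpose, hsymm, dotProduct_comm u]
    ring
  rw [hL, hF, hH']
  simp only [smul_mulVec, add_mulVec, sub_mulVec, neg_mulVec, vecMulVec_mulVec, op_smul_eq_smul,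
    dotProduct_smul, smul_dotProduct, dotProduct_add, sub_dotProduct, neg_dotProduct, smul_eq_mul]
  simp only [x, dq, w, dotProduct_comm k₀, dotProduct_comm u]
  ring

end

theorem sum_smul_vecMulVec_ite {ι n α : Type*} [DecidableEq ι] [Semiring α] {s : Finset ι}
    {i : ι} (hi : i ∈ s) (c : ι → α) (k : ι → n → α) (v : n → α) :
    ∑ j ∈ s, c j • vecMulVec (if j = i then v else k j) (if j = i then v else k j) =
      c i • vecMulVec v v + ∑ j ∈ s.erase i, c j • vecMulVec (k j) (k j) := by
  rw [← add_sum_erase _ _ hi, if_pos rfl]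
  congr 1
  exact sum_congr rfl fun j hj => by rw [if_neg (ne_of_mem_erase hj)]

theorem grad_key_adaptive_regularized_solves_general (D T i : ℕ) (hi1 : 1 ≤ i)
    (a : ℝ) (ha : 0 < a)
    (k : ℕ → Fin D → ℝ) (γ : ℕ → ℝ) (hγ : ∀ j ∈ Finset.Icc 1 T, 0 < γ j)
    (q g : ℕ → Fin D → ℝ) (k₀ : Fin D → ℝ) :
    let ζ : ℕ → ℝ := fun t => ∏ j ∈ Finset.Icc 1 t, γ j
    let M : ℕ → ℕ → ℝ := fun j t => if j ≤ t then ζ t / ζ j else 0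
    let key : (Fin D → ℝ) → ℕ → (Fin D → ℝ) := fun kv j => if j = i then kv else k j
    let H : ℕ → (Fin D → ℝ) → Matrix (Fin D) (Fin D) ℝ :=
      fun t kv => ∑ j ∈ Finset.Icc 1 t, M j t • vecMulVec (key kv j) (key kv j)
    let lam : ℕ → (Fin D → ℝ) → ℝ := fun t kv => a * frobNorm (H t kv)
    let Lfun : (Fin D → ℝ) → ℝ := fun kv =>
      ∑ t ∈ Finset.Icc i T, g t ⬝ᵥ ((H t kv + lam t kv • 1)⁻¹ *ᵥ q t)
    let x : ℕ → Fin D → ℝ := fun t => (H t k₀ + lam t k₀ • 1)⁻¹ *ᵥ q t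
    let dq : ℕ → Fin D → ℝ := fun t => (H t k₀ + lam t k₀ • 1)⁻¹ *ᵥ g t
    let w : ℕ → ℝ := fun t => 2 * a * (x t ⬝ᵥ dq t) / frobNorm (H t k₀)
    let grad : Fin D → ℝ := ∑ t ∈ Finset.Icc i T,
      M i t • ((-(vecMulVec (dq t) (x t)) - vecMulVec (x t) (dq t) - w t • H t k₀) *ᵥ k₀)
    (∀ t ∈ Finset.Icc i T, H t k₀ ≠ 0) →
      ∃ Lmap : (Fin D → ℝ) →L[ℝ] ℝ,
        (∀ u, Lmap u = grad ⬝ᵥ u) ∧ HasFDerivAt Lfun Lmap k₀ := by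
  intro ζ M key H lam Lfun x dq w grad hH
  have hζ : ∀ t ≤ T, 0 < ζ t := fun t ht =>
    prod_pos fun j hj => hγ j (Icc_subset_Icc_right ht hj)
  have hM : ∀ j t, t ≤ T → 0 ≤ M j t := fun j t ht => by
    by_cases hjt : j ≤ t
    · simp only [M, if_pos hjt]
      exact div_nonneg (hζ t ht).le (hζ j (hjt.trans ht)).le
    · simp only [M, if_neg hjt, le_refl]
  have hterm : ∀ t ∈ Icc i T, ∃ L : (Fin D → ℝ) →L[ℝ] ℝ,
      (∀ u, L u = (M i t • ((-vecMulVec (dq t) (x t) - vecMulVec (x t) (dq t) -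
        w t • H t k₀) *ᵥ k₀)) ⬝ᵥ u) ∧
      HasFDerivAt (fun kv => g t ⬝ᵥ ((H t kv + lam t kv • 1)⁻¹ *ᵥ q t)) L k₀ := by
    intro t ht
    obtain ⟨hit, htT⟩ := mem_Icc.mp ht
    exact exists_hasFDerivAt_dotProduct_regularize_inv_mulVec_rankOne (hM i t htT) ha
      (posSemidef_sum _ fun j _ => posSemidef_smul_vecMulVec_self (hM j t htT) (k j))
      (fun kv => sum_smul_vecMulVec_ite (mem_Icc.mpr ⟨hi1, hit⟩) _ _ _) (hH t ht) (g t) (q t)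
  choose! L hL hLderiv using hterm
  refine ⟨∑ t ∈ Icc i T, L t, fun u => ?_, HasFDerivAt.fun_sum hLderiv⟩
  rw [_root_.sum_apply, sum_dotProduct]
  exact sum_congr rfl fun t ht => hL t ht u

/-- **Lemma 1.** Gradient with respect to the `i`-th key through
the adaptively regularized solves: with `H_t(k) = ∑_{j≤t} M_{j,t} k_j k_jᵀ`
(`k_i` replaced by the variable `k`), `λ_t(k) = a‖H_t(k)‖_F` and
`L(k) = ∑_{t=i}^T ⟨g_t, (H_t(k) + λ_t(k) I)⁻¹ q_t⟩`, if every `H_t(k₀)` is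
nonzero then `L` is differentiable at `k₀` with gradient
`∇L(k₀) = ∑_{t≥i} M_{i,t}(−dq_t x_tᵀ − x_t dq_tᵀ − w_t H_t(k₀)) k₀`, where
`x_t = (H_t+λ_tI)⁻¹q_t`, `dq_t = (H_t+λ_tI)⁻¹g_t`,
`w_t = 2a⟨x_t, dq_t⟩/‖H_t(k₀)‖_F`. -/
theorem grad_key_adaptive_regularized_solves (D T i : ℕ) (hi1 : 1 ≤ i) (hiT : i ≤ T)
    (a : ℝ) (ha : 0 < a)
    (k : ℕ → Fin D → ℝ) (γ : ℕ → ℝ) (hγ : ∀ j ∈ Finset.Icc 1 T, 0 < γ j)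
    (q g : ℕ → Fin D → ℝ) (k₀ : Fin D → ℝ) :
    let ζ : ℕ → ℝ := fun t => ∏ j ∈ Finset.Icc 1 t, γ j
    let M : ℕ → ℕ → ℝ := fun j t => if j ≤ t then ζ t / ζ j else 0
    let key : (Fin D → ℝ) → ℕ → (Fin D → ℝ) := fun kv j => if j = i then kv else k j
    let H : ℕ → (Fin D → ℝ) → Matrix (Fin D) (Fin D) ℝ :=
      fun t kv => ∑ j ∈ Finset.Icc 1 t, M j t • vecMulVec (key kv j) (key kv j)
    let lam : ℕ → (Fin D → ℝ) → ℝ := fun t kv => a * frobNorm (H t kv)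
    let Lfun : (Fin D → ℝ) → ℝ := fun kv =>
      ∑ t ∈ Finset.Icc i T, g t ⬝ᵥ ((H t kv + lam t kv • 1)⁻¹ *ᵥ q t)
    let x : ℕ → Fin D → ℝ := fun t => (H t k₀ + lam t k₀ • 1)⁻¹ *ᵥ q t
    let dq : ℕ → Fin D → ℝ := fun t => (H t k₀ + lam t k₀ • 1)⁻¹ *ᵥ g t
    let w : ℕ → ℝ := fun t => 2 * a * (x t ⬝ᵥ dq t) / frobNorm (H t k₀)
    let grad : Fin D → ℝ := ∑ t ∈ Finset.Icc i T,
      M i t • ((-(vecMulVec (dq t) (x t)) - vecMulVec (x t) (dq t) - w t • H t k₀) *ᵥ k₀)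
    (∀ t ∈ Finset.Icc i T, H t k₀ ≠ 0) →
      ∃ Lmap : (Fin D → ℝ) →L[ℝ] ℝ,
        (∀ u, Lmap u = grad ⬝ᵥ u) ∧ HasFDerivAt Lfun Lmap k₀ :=
  grad_key_adaptive_regularized_solves_general D T i hi1 a ha k γ hγ q g k₀
end
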